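/- arXiv:2407.08339 — 2 statements merged into one kernel-verified Lean document; each statement's English description precedes it below -/
import Mathlib

section
/- Let G be a finite subgroup of GL_n(ℝ), let b₁,…,b_l ∈ ℝ[X] generate ℝ[X] as a module over ℝ[X]^G, and let B be the l×l matrix with G-invariant entries B_{ij} := R_G(b_i b_j). Then a ring homomorphism φ: ℝ[X]^G → ℝ extends to a ring homomorphism ℝ[X] → ℝ if and only if the real symmetric l×l matrix (φ(B_{ij}))_{1≤i,j≤l} is positive semidefinite. -/
open MvPolynomial

/-- The action of `σ ∈ GL_n(ℝ)` on real polynomials, `(σ · p)(x) = p(σ⁻¹ x)`,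
given by substituting `X i ↦ ∑ j (σ⁻¹)_{i j} X j`. -/
noncomputable def polyAct {n : ℕ} (σ : Matrix.GeneralLinearGroup (Fin n) ℝ) :
    MvPolynomial (Fin n) ℝ →ₐ[ℝ] MvPolynomial (Fin n) ℝ :=
  aeval fun i => ∑ j, (σ⁻¹).val i j • X j

lemma polyAct_polyAct {n : ℕ} (τ σ : Matrix.GeneralLinearGroup (Fin n) ℝ)
    (p : MvPolynomial (Fin n) ℝ) : polyAct τ (polyAct σ p) = polyAct (τ * σ) p := by
  have : (polyAct τ).comp (polyAct σ) = polyAct (τ * σ) := by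
    apply MvPolynomial.algHom_ext
    intro i
    simp only [AlgHom.comp_apply, polyAct, aeval_X, map_sum]
    simp only [map_smul, aeval_X]
    simp only [Finset.smul_sum, smul_smul]
    rw [Finset.sum_comm]
    refine Finset.sum_congr rfl fun k _ => ?_
    rw [← Finset.sum_smul, mul_inv_rev, Units.val_mul, Matrix.mul_apply]
  exact DFunLike.congr_fun this p

/-- The subalgebra `ℝ[X]^G` of `G`-invariant polynomials. -/
noncomputable def invariants {n : ℕ} (G : Subgroup (Matrix.GeneralLinearGroup (Fin n) ℝ)) :
    Subalgebra ℝ (MvPolynomial (Fin n) ℝ) where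
  carrier := {p | ∀ σ ∈ G, polyAct σ p = p}
  mul_mem' := fun hp hq σ hσ => by rw [map_mul, hp σ hσ, hq σ hσ]
  one_mem' := fun σ _ => map_one (polyAct σ)
  add_mem' := fun hp hq σ hσ => by rw [map_add, hp σ hσ, hq σ hσ]
  zero_mem' := fun σ _ => map_zero (polyAct σ)
  algebraMap_mem' := fun r σ _ => (polyAct σ).commutes r

/-- The Reynolds operator `R_H(p) = (1/|H|) ∑_{σ ∈ H} σ · p` of a (finite) subgroup `H`. -/
noncomputable def reynolds {n : ℕ} (H : Subgroup (Matrix.GeneralLinearGroup (Fin n) ℝ))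
    (p : MvPolynomial (Fin n) ℝ) : MvPolynomial (Fin n) ℝ :=
  (Nat.card H : ℝ)⁻¹ • ∑ᶠ σ ∈ (H : Set (Matrix.GeneralLinearGroup (Fin n) ℝ)), polyAct σ p

section Rey
variable {n : ℕ} (G : Subgroup (Matrix.GeneralLinearGroup (Fin n) ℝ)) [Fintype G]

lemma reynolds_eq_sum (p : MvPolynomial (Fin n) ℝ) :
    reynolds G p = (Nat.card G : ℝ)⁻¹ • ∑ σ : G, polyAct ↑σ p := by
  unfold reynolds
  congr 1
  rw [← finsum_set_coe_eq_finsum_mem, finsum_eq_sum_of_fintype]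
  exact Finset.sum_congr rfl fun σ _ => rfl

lemma reynolds_mem (p : MvPolynomial (Fin n) ℝ) : reynolds G p ∈ invariants G := by
  intro τ hτ
  rw [reynolds_eq_sum, map_smul, map_sum]
  congr 1
  rw [← Equiv.sum_comp (Equiv.mulLeft (⟨τ, hτ⟩ : G)) (fun σ : G => polyAct (↑σ) p)]
  refine Finset.sum_congr rfl fun σ _ => ?_
  rw [polyAct_polyAct]
  rfl

lemma reynolds_add (p q : MvPolynomial (Fin n) ℝ) :
    reynolds G (p + q) = reynolds G p + reynolds G q := by
  simp only [reynolds_eq_sum, map_add, Finset.sum_add_distrib, smul_add]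

lemma reynolds_smul (c : ℝ) (p : MvPolynomial (Fin n) ℝ) :
    reynolds G (c • p) = c • reynolds G p := by
  rw [reynolds_eq_sum, reynolds_eq_sum]
  simp only [map_smul]
  rw [← Finset.smul_sum, smul_comm]

lemma reynolds_mul_inv {f : MvPolynomial (Fin n) ℝ} (hf : f ∈ invariants G)
    (p : MvPolynomial (Fin n) ℝ) : reynolds G (f * p) = f * reynolds G p := by
  simp only [reynolds_eq_sum]
  have : ∀ σ : G, polyAct (↑σ) (f * p) = f * polyAct (↑σ) p := by
    intro σ; rw [map_mul, hf ↑σ σ.2]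
  simp only [this, ← Finset.mul_sum, mul_smul_comm]

lemma reynolds_of_mem {f : MvPolynomial (Fin n) ℝ} (hf : f ∈ invariants G) :
    reynolds G f = f := by
  have : ∀ σ : G, polyAct (↑σ) f = f := fun σ => hf ↑σ σ.2
  rw [reynolds_eq_sum]
  simp only [this, Finset.sum_const, Finset.card_univ]
  rw [← Nat.card_eq_fintype_card, ← Nat.cast_smul_eq_nsmul ℝ, smul_smul,
    inv_mul_cancel₀, one_smul]
  exact_mod_cast Nat.card_pos.ne'

lemma reynolds_sum {ι : Type*} (s : Finset ι) (f : ι → MvPolynomial (Fin n) ℝ) :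
    reynolds G (∑ i ∈ s, f i) = ∑ i ∈ s, reynolds G (f i) :=
  map_sum (AddMonoidHom.mk' (reynolds G) (reynolds_add G)) f s

lemma reynolds_one : reynolds G 1 = 1 := reynolds_of_mem G (one_mem (invariants G))

end Rey

section Lsec
variable {n : ℕ} {G : Subgroup (Matrix.GeneralLinearGroup (Fin n) ℝ)} [Fintype G]
  (φ : invariants G →+* ℝ)

lemma phi_algebraMap (r : ℝ) : φ (algebraMap ℝ (invariants G) r) = r := by
  have : φ.comp (algebraMap ℝ (invariants G)) = RingHom.id ℝ := Subsingleton.elim _ _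
  exact DFunLike.congr_fun this r

lemma phi_smul (c : ℝ) (x : invariants G) : φ (c • x) = c * φ x := by
  rw [Algebra.smul_def, map_mul, phi_algebraMap]

noncomputable def Lf (p : MvPolynomial (Fin n) ℝ) : ℝ :=
  φ ⟨reynolds G p, reynolds_mem G p⟩

lemma Lf_add (p q : MvPolynomial (Fin n) ℝ) : Lf φ (p + q) = Lf φ p + Lf φ q := by
  unfold Lf
  rw [← φ.map_add]
  exact congrArg φ (Subtype.ext (reynolds_add G p q))

lemma Lf_smul (c : ℝ) (p : MvPolynomial (Fin n) ℝ) : Lf φ (c • p) = c * Lf φ p := by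
  unfold Lf
  rw [← phi_smul]
  exact congrArg φ (Subtype.ext (reynolds_smul G c p))

lemma Lf_mul_inv {f : MvPolynomial (Fin n) ℝ} (hf : f ∈ invariants G)
    (p : MvPolynomial (Fin n) ℝ) : Lf φ (f * p) = φ ⟨f, hf⟩ * Lf φ p := by
  unfold Lf
  rw [← φ.map_mul]
  exact congrArg φ (Subtype.ext (reynolds_mul_inv G hf p))

lemma Lf_of_mem {f : MvPolynomial (Fin n) ℝ} (hf : f ∈ invariants G) :
    Lf φ f = φ ⟨f, hf⟩ :=
  congrArg φ (Subtype.ext (reynolds_of_mem G hf))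

lemma Lf_one : Lf φ 1 = 1 := by
  rw [Lf_of_mem φ (one_mem (invariants G))]
  exact map_one φ

lemma Lf_sum {ι : Type*} (s : Finset ι) (f : ι → MvPolynomial (Fin n) ℝ) :
    Lf φ (∑ i ∈ s, f i) = ∑ i ∈ s, Lf φ (f i) :=
  map_sum (AddMonoidHom.mk' (Lf φ) (Lf_add φ)) f s

lemma Lf_zero : Lf φ 0 = 0 :=
  map_zero (AddMonoidHom.mk' (Lf φ) (Lf_add φ))

lemma Lf_sub (p q : MvPolynomial (Fin n) ℝ) : Lf φ (p - q) = Lf φ p - Lf φ q :=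
  map_sub (AddMonoidHom.mk' (Lf φ) (Lf_add φ)) p q

lemma Lf_C_mul (c : ℝ) (p : MvPolynomial (Fin n) ℝ) : Lf φ (C c * p) = c * Lf φ p := by
  rw [← smul_eq_C_mul, Lf_smul]

noncomputable def LfHom : MvPolynomial (Fin n) ℝ →+ ℝ :=
  AddMonoidHom.mk' (Lf φ) (Lf_add φ)

end Lsec

section Main
variable {n l : ℕ} {G : Subgroup (Matrix.GeneralLinearGroup (Fin n) ℝ)} [Fintype G]

lemma psi_smul (ψ : MvPolynomial (Fin n) ℝ →+* ℝ) (c : ℝ) (p : MvPolynomial (Fin n) ℝ) :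
    ψ (c • p) = c * ψ p := by
  rw [smul_eq_C_mul, map_mul]
  congr 1
  have : ψ.comp (C : ℝ →+* MvPolynomial (Fin n) ℝ) = RingHom.id ℝ := Subsingleton.elim _ _
  exact DFunLike.congr_fun this c

/-- forward : the quadratic form is `ψ (R (q^2))`. -/
lemma forward_psd (b : Fin l → MvPolynomial (Fin n) ℝ)
    (hB : ∀ i j, reynolds G (b i * b j) ∈ invariants G)
    (φ : invariants G →+* ℝ) (ψ : MvPolynomial (Fin n) ℝ →+* ℝ)
    (hψ : ∀ (f : MvPolynomial (Fin n) ℝ) (hf : f ∈ invariants G), ψ f = φ ⟨f, hf⟩) :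
    Matrix.PosSemidef (Matrix.of fun i j => φ ⟨reynolds G (b i * b j), hB i j⟩) := by
  rw [Matrix.posSemidef_iff_dotProduct_mulVec]
  constructor
  · -- Hermitian
    ext i j
    simp only [Matrix.conjTranspose_apply, Matrix.of_apply, star_trivial]
    exact congrArg φ (Subtype.ext (congrArg (reynolds G) (mul_comm (b j) (b i))))
  · intro x
    set q : MvPolynomial (Fin n) ℝ := ∑ i, x i • b i with hq
    have key : (dotProduct (star x)
        (Matrix.mulVec (Matrix.of fun i j => φ ⟨reynolds G (b i * b j), hB i j⟩) x))
        = ψ (reynolds G (q * q)) := by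
      have hqq : q * q = ∑ i, ∑ j, (x i * x j) • (b i * b j) := by
        rw [hq, Finset.sum_mul_sum]
        refine Finset.sum_congr rfl fun i _ => Finset.sum_congr rfl fun j _ => ?_
        rw [smul_mul_smul_comm]
      have hrq : reynolds G (q * q) = ∑ i, ∑ j, (x i * x j) • reynolds G (b i * b j) := by
        rw [hqq, reynolds_sum]
        refine Finset.sum_congr rfl fun i _ => ?_
        rw [reynolds_sum]
        exact Finset.sum_congr rfl fun j _ => reynolds_smul G _ _
      rw [hrq, map_sum, dotProduct, star_trivial]
      refine Finset.sum_congr rfl fun i _ => ?_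
      rw [map_sum, Matrix.mulVec, dotProduct, Finset.mul_sum]
      refine Finset.sum_congr rfl fun j _ => ?_
      rw [psi_smul, hψ _ (hB i j), Matrix.of_apply]
      ring
    rw [key, reynolds_eq_sum, psi_smul, map_sum]
    have : ∀ σ : G, ψ (polyAct (↑σ) (q * q)) = (ψ (polyAct (↑σ) q))^2 := by
      intro σ; rw [map_mul, map_mul, sq]
    rw [Finset.sum_congr rfl fun σ _ => this σ]
    positivity

end Main


section Backward
variable {n l : ℕ} {G : Subgroup (Matrix.GeneralLinearGroup (Fin n) ℝ)} [Fintype G]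

lemma Lf_sq_nonneg (b : Fin l → MvPolynomial (Fin n) ℝ)
    (hB : ∀ i j, reynolds G (b i * b j) ∈ invariants G)
    (φ : invariants G →+* ℝ)
    (hM : Matrix.PosSemidef (Matrix.of fun i j => φ ⟨reynolds G (b i * b j), hB i j⟩))
    (p : MvPolynomial (Fin n) ℝ) (a : Fin l → MvPolynomial (Fin n) ℝ)
    (ha : ∀ i, a i ∈ invariants G) (hp : p = ∑ i, a i * b i) :
    0 ≤ Lf φ (p * p) := by
  set v : Fin l → ℝ := fun i => φ ⟨a i, ha i⟩ with hv
  have hpp : p * p = ∑ i, ∑ j, (a i * a j) * (b i * b j) := by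
    rw [hp, Finset.sum_mul_sum]
    exact Finset.sum_congr rfl fun i _ => Finset.sum_congr rfl fun j _ => by ring
  have hL : Lf φ (p * p) = ∑ i, ∑ j, v i * (v j * Lf φ (b i * b j)) := by
    rw [hpp, Lf_sum]
    refine Finset.sum_congr rfl fun i _ => ?_
    rw [Lf_sum]
    refine Finset.sum_congr rfl fun j _ => ?_
    rw [Lf_mul_inv φ (mul_mem (ha i) (ha j)) (b i * b j)]
    have : φ ⟨a i * a j, mul_mem (ha i) (ha j)⟩ = v i * v j := by
      rw [hv]
      exact map_mul φ ⟨a i, ha i⟩ ⟨a j, ha j⟩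
    rw [this, mul_assoc]
  rw [hL]
  have := (Matrix.posSemidef_iff_dotProduct_mulVec.mp hM).2 v
  rw [dotProduct, star_trivial] at this
  convert this using 2 with i
  · rfl
  rw [Matrix.mulVec, dotProduct, Finset.mul_sum]
  refine Finset.sum_congr rfl fun j _ => ?_
  rw [Matrix.of_apply]
  have : Lf φ (b i * b j) = φ ⟨reynolds G (b i * b j), hB i j⟩ := rfl
  rw [this]
  ring

set_option maxHeartbeats 1600000 in
set_option synthInstance.maxHeartbeats 400000 in
lemma backward_exists (b : Fin l → MvPolynomial (Fin n) ℝ)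
    (hb : ∀ p : MvPolynomial (Fin n) ℝ, ∃ a : Fin l → MvPolynomial (Fin n) ℝ,
      (∀ i, a i ∈ invariants G) ∧ p = ∑ i, a i * b i)
    (hB : ∀ i j, reynolds G (b i * b j) ∈ invariants G)
    (φ : invariants G →+* ℝ)
    (hM : Matrix.PosSemidef (Matrix.of fun i j => φ ⟨reynolds G (b i * b j), hB i j⟩)) :
    ∃ ψ : MvPolynomial (Fin n) ℝ →+* ℝ,
      ∀ (f : MvPolynomial (Fin n) ℝ) (hf : f ∈ invariants G), ψ f = φ ⟨f, hf⟩ := by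
  classical
  -- positivity of the functional on squares
  have hsq : ∀ p : MvPolynomial (Fin n) ℝ, 0 ≤ Lf φ (p * p) := by
    intro p
    obtain ⟨a, ha, hp⟩ := hb p
    exact Lf_sq_nonneg b hB φ hM p a ha hp
  -- the null ideal
  set J : Ideal (MvPolynomial (Fin n) ℝ) :=
    { carrier := {p | ∀ q, Lf φ (p * q) = 0}
      zero_mem' := fun q => by rw [zero_mul, Lf_zero]
      add_mem' := fun {p p'} hp hp' q => by
        rw [add_mul, Lf_add, hp q, hp' q, add_zero]
      smul_mem' := fun c p hp q => by
        have h1 : c • p * q = p * (c * q) := by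
          rw [smul_eq_mul]; ring
        rw [h1, hp (c * q)] } with hJ
  have hmemJ : ∀ p : MvPolynomial (Fin n) ℝ, p ∈ J ↔ ∀ q, Lf φ (p * q) = 0 := fun p => Iff.rfl
  -- the quotient algebra
  set A := MvPolynomial (Fin n) ℝ ⧸ J with hA
  set π : MvPolynomial (Fin n) ℝ →+* A := Ideal.Quotient.mk J with hπ
  -- the linear functional descends to the quotient
  have hLJ : ∀ p q : MvPolynomial (Fin n) ℝ, p - q ∈ J → Lf φ p = Lf φ q := by
    intro p q h
    have := (hmemJ _).mp h 1
    rw [mul_one, Lf_sub] at this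
    linarith
  set LC : A → ℝ := fun x => Quotient.liftOn' x (Lf φ)
    (fun p q h => hLJ p q ((Submodule.quotientRel_def J).mp h)) with hLC
  have hLCπ : ∀ p, LC (π p) = Lf φ p := fun p => rfl
  have hsurj : Function.Surjective π := Ideal.Quotient.mk_surjective
  -- Cauchy-Schwarz style: a square-null element is in J
  have hCS : ∀ p : MvPolynomial (Fin n) ℝ, Lf φ (p * p) = 0 → p ∈ J := by
    intro p hp0 q
    have hexp : ∀ t : ℝ, 0 ≤ Lf φ (q * q) + 2 * t * Lf φ (p * q) := by
      intro t
      have h0 := hsq (q + C t * p)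
      have hqt : (q + C t * p) * (q + C t * p)
          = q * q + (C t * (p * q) + C t * (p * q)) + C t * (C t * (p * p)) := by ring
      rw [hqt, Lf_add, Lf_add, Lf_add, Lf_C_mul, Lf_C_mul, Lf_C_mul, hp0] at h0
      linarith
    by_contra hne
    set aa := Lf φ (q * q) with haa
    set bb := Lf φ (p * q) with hbb
    have haa0 : 0 ≤ aa := hsq q
    have h2 := hexp (-(aa + 1) / (2 * bb))
    have : 2 * (-(aa + 1) / (2 * bb)) * bb = -(aa + 1) := by
      field_simp
    rw [this] at h2
    linarith
  -- inner product space structure on A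
  letI innerA : Inner ℝ A := ⟨fun x y => LC (x * y)⟩
  have hinner : ∀ p q : MvPolynomial (Fin n) ℝ,
      (inner ℝ (π p) (π q) : ℝ) = Lf φ (p * q) := by
    intro p q
    show LC (π p * π q) = Lf φ (p * q)
    rw [← map_mul, hLCπ]
  letI core : InnerProductSpace.Core ℝ A :=
    { inner := fun x y => LC (x * y)
      conj_inner_symm := by
        intro x y
        obtain ⟨p, rfl⟩ := hsurj x
        obtain ⟨q, rfl⟩ := hsurj y
        simp only [starRingEnd_apply, star_trivial]
        show LC (π q * π p) = LC (π p * π q)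
        rw [mul_comm]
      re_inner_nonneg := by
        intro x
        obtain ⟨p, rfl⟩ := hsurj x
        simpa [hinner, ← hLCπ] using hsq p
      add_left := by
        intro x y z
        obtain ⟨p, rfl⟩ := hsurj x
        obtain ⟨q, rfl⟩ := hsurj y
        obtain ⟨r, rfl⟩ := hsurj z
        show LC ((π p + π q) * π r) = LC (π p * π r) + LC (π q * π r)
        rw [← map_add, ← map_mul, ← map_mul, ← map_mul, hLCπ, hLCπ, hLCπ, add_mul, Lf_add]
      smul_left := by
        intro x y r
        obtain ⟨p, rfl⟩ := hsurj x
        obtain ⟨q, rfl⟩ := hsurj y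
        simp only [starRingEnd_apply, star_trivial]
        have hsm : r • π p = π (C r * p) := by
          rw [← smul_eq_C_mul]
          exact (Submodule.Quotient.mk_smul J r p).symm
        rw [hsm]
        show LC (π (C r * p) * π q) = r * LC (π p * π q)
        rw [← map_mul, hLCπ, ← map_mul, hLCπ, mul_assoc, Lf_C_mul]
      definite := by
        intro x hx
        obtain ⟨p, rfl⟩ := hsurj x
        have : Lf φ (p * p) = 0 := by rw [← hinner p p]; exact hx
        exact Ideal.Quotient.eq_zero_iff_mem.mpr (hCS p this) }
  letI : NormedAddCommGroup A := core.toNormedAddCommGroup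
  letI : InnerProductSpace ℝ A := InnerProductSpace.ofCore core.toCore
  -- A is finite dimensional, spanned by the images of the b i
  have hone : (1 : MvPolynomial (Fin n) ℝ) ∉ J := by
    intro h1
    have := (hmemJ 1).mp h1 1
    rw [one_mul, Lf_one] at this
    exact one_ne_zero this
  haveI : Nontrivial A := Ideal.Quotient.nontrivial_iff.mpr (fun h => hone (h ▸ Submodule.mem_top))
  have hspan : Submodule.span ℝ (Set.range fun i => π (b i)) = ⊤ := by
    rw [Submodule.eq_top_iff']
    intro x
    obtain ⟨p, rfl⟩ := hsurj x
    obtain ⟨a, ha, hp⟩ := hb p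
    rw [hp, map_sum π (fun i => a i * b i) Finset.univ]
    refine Submodule.sum_mem _ fun i _ => ?_
    have hmm : a i * b i - (φ ⟨a i, ha i⟩) • b i ∈ J := by
      intro q
      have hrw : (a i * b i - (φ ⟨a i, ha i⟩) • b i) * q
          = a i * (b i * q) - C (φ ⟨a i, ha i⟩) * (b i * q) := by
        rw [smul_eq_C_mul]; ring
      rw [hrw, Lf_sub, Lf_C_mul, Lf_mul_inv φ (ha i), sub_self]
    have hπe : π (a i * b i) = (φ ⟨a i, ha i⟩) • π (b i) := by
      rw [Ideal.Quotient.eq.mpr hmm]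
      exact Submodule.Quotient.mk_smul J _ _
    rw [hπe]
    exact Submodule.smul_mem _ _ (Submodule.subset_span ⟨i, rfl⟩)
  haveI : FiniteDimensional ℝ A := by
    constructor
    rw [Submodule.fg_def]
    exact ⟨Set.range fun i => π (b i), Set.finite_range _, hspan⟩
  -- pick a maximal ideal; the residue field is ℝ
  obtain ⟨m, hm⟩ := Ideal.exists_maximal A
  haveI := hm
  letI : Field (A ⧸ m) := Ideal.Quotient.field m
  set ρ : A →+* A ⧸ m := Ideal.Quotient.mk m with hρ
  have hreal : ∀ z : A ⧸ m, ∃ r : ℝ, algebraMap ℝ (A ⧸ m) r = z := by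
    intro z
    obtain ⟨c, rfl⟩ := Ideal.Quotient.mk_surjective z
    set T : A →ₗ[ℝ] A := LinearMap.mulLeft ℝ c with hT'
    have hT : T.IsSymmetric := by
      intro x y
      obtain ⟨p, rfl⟩ := hsurj x
      obtain ⟨q, rfl⟩ := hsurj y
      obtain ⟨r, hr⟩ := hsurj c
      show LC ((c * π p) * π q) = LC (π p * (c * π q))
      rw [← hr, ← map_mul, ← map_mul, ← map_mul, ← map_mul, hLCπ, hLCπ]
      exact congrArg (Lf φ) (by ring)
    have hn : Module.finrank ℝ A = Module.finrank ℝ A := rfl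
    set v := hT.eigenvectorBasis hn with hv
    set μ := hT.eigenvalues hn with hμ
    have hev : ∀ i, c * v i = (μ i) • v i := fun i => hT.apply_eigenvectorBasis hn i
    set d : A := ∏ i, (c - algebraMap ℝ A (μ i)) with hd'
    have hdv : ∀ j, d * v j = 0 := by
      intro j
      have h1 : (c - algebraMap ℝ A (μ j)) * v j = 0 := by
        rw [sub_mul, hev j]
        exact sub_eq_zero.mpr (Algebra.smul_def (μ j) (v j))
      rw [hd', ← Finset.prod_erase_mul _ _ (Finset.mem_univ j), mul_assoc, h1, mul_zero]
    have hd : d = 0 := by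
      have hLd : LinearMap.mulLeft ℝ d = (0 : A →ₗ[ℝ] A) := by
        apply v.toBasis.ext
        intro j
        simp only [LinearMap.mulLeft_apply, LinearMap.zero_apply, OrthonormalBasis.coe_toBasis]
        exact hdv j
      calc d = d * 1 := (mul_one d).symm
        _ = LinearMap.mulLeft ℝ d 1 := rfl
        _ = 0 := by rw [hLd]; rfl
    have hprod : ∏ i, (ρ c - algebraMap ℝ (A ⧸ m) (μ i)) = 0 := by
      have h2 := congrArg ρ hd
      rw [hd', map_prod ρ (fun i => c - algebraMap ℝ A (μ i)) Finset.univ, map_zero] at h2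
      rw [← h2]
      refine Finset.prod_congr rfl fun i _ => ?_
      rw [map_sub]
      congr 1
    obtain ⟨i, _, hi⟩ := Finset.prod_eq_zero_iff.mp hprod
    exact ⟨μ i, (sub_eq_zero.mp hi).symm⟩
  have hbij : Function.Bijective (algebraMap ℝ (A ⧸ m)) :=
    ⟨(algebraMap ℝ (A ⧸ m)).injective, hreal⟩
  set e : ℝ ≃+* (A ⧸ m) := RingEquiv.ofBijective _ hbij with he
  refine ⟨(e.symm.toRingHom.comp (ρ.comp π)), ?_⟩
  intro f hf
  have hfJ : f - C (φ ⟨f, hf⟩) ∈ J := by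
    intro q
    rw [sub_mul, Lf_sub, Lf_mul_inv φ hf, Lf_C_mul, sub_self]
  show e.symm (ρ (π f)) = φ ⟨f, hf⟩
  have h3 : π f = π (C (φ ⟨f, hf⟩)) := Ideal.Quotient.eq.mpr hfJ
  rw [h3]
  have h4 : ρ (π (C (φ ⟨f, hf⟩))) = algebraMap ℝ (A ⧸ m) (φ ⟨f, hf⟩) := by
    have h5 : π (C (φ ⟨f, hf⟩)) = algebraMap ℝ A (φ ⟨f, hf⟩) := by
      rw [← MvPolynomial.algebraMap_eq, hπ, ← Ideal.Quotient.algebraMap_eq J]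
      exact (IsScalarTower.algebraMap_apply ℝ _ A _).symm
    rw [h5]
    exact (IsScalarTower.algebraMap_apply ℝ A (A ⧸ m) _).symm
  rw [h4]
  exact e.symm_apply_apply (φ ⟨f, hf⟩)

end Backward

/-- if `b₁,…,b_l` generate `ℝ[X]` over `ℝ[X]^G` and `B_{ij} = R_G(b_i b_j)`,
then `φ : ℝ[X]^G → ℝ` extends to `ℝ[X]` iff the real symmetric matrix `(φ(B_{ij}))_{ij}`
is positive semidefinite. -/
theorem statement_4 {n l : ℕ} (G : Subgroup (Matrix.GeneralLinearGroup (Fin n) ℝ)) [Finite G]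
    (b : Fin l → MvPolynomial (Fin n) ℝ)
    (hb : ∀ p : MvPolynomial (Fin n) ℝ, ∃ a : Fin l → MvPolynomial (Fin n) ℝ,
      (∀ i, a i ∈ invariants G) ∧ p = ∑ i, a i * b i)
    (hB : ∀ i j, reynolds G (b i * b j) ∈ invariants G)
    (φ : invariants G →+* ℝ) :
    (∃ ψ : MvPolynomial (Fin n) ℝ →+* ℝ,
        ∀ (f : MvPolynomial (Fin n) ℝ) (hf : f ∈ invariants G), ψ f = φ ⟨f, hf⟩) ↔
      Matrix.PosSemidef (Matrix.of fun i j => φ ⟨reynolds G (b i * b j), hB i j⟩) := by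
  haveI : Fintype ↥G := Fintype.ofFinite ↥G
  constructor
  · rintro ⟨ψ, hψ⟩
    exact forward_psd b hB φ ψ hψ
  · intro hM
    exact backward_exists b hb hB φ hM
end

section
/- Let G be a finite subgroup of GL_n(ℝ) and let H be a broad subgroup of G, i.e., an elementary abelian 2-subgroup such that every involution of G is conjugate in G to an element of H. Let x ∈ ℂⁿ be a point with trivial G-stabilizer (σ·x = x implies σ = 1) such that f(x) ∈ ℝ for every f ∈ ℝ[X]^G. Then there exists g ∈ G such that h(g·x) ∈ ℝ for every h ∈ ℝ[X]^H. -/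
open MvPolynomial

/-- The action of `σ ∈ GL_n(ℝ)` on `ℂⁿ`, via the inclusion `GL_n(ℝ) ⊆ GL_n(ℂ)`. -/
noncomputable def mAct {n : ℕ} (σ : Matrix.GeneralLinearGroup (Fin n) ℝ) (x : Fin n → ℂ) :
    Fin n → ℂ := fun i => ∑ j, (σ.val i j : ℂ) * x j

section Aux

variable {n : ℕ}

lemma mem_invariants {G : Subgroup (Matrix.GeneralLinearGroup (Fin n) ℝ)}
    {p : MvPolynomial (Fin n) ℝ} : p ∈ invariants G ↔ ∀ σ ∈ G, polyAct σ p = p :=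
  Iff.rfl

lemma aeval_polyAct (σ : Matrix.GeneralLinearGroup (Fin n) ℝ) {A : Type*} [CommRing A]
    [Algebra ℝ A] (y : Fin n → A) (p : MvPolynomial (Fin n) ℝ) :
    aeval y (polyAct σ p) = aeval (fun i => ∑ j, (σ⁻¹).val i j • y j) p := by
  show aeval y (aeval (fun i => ∑ j, (σ⁻¹).val i j • X j) p) = _
  rw [comp_aeval_apply]
  have h : (fun i => (aeval y) (∑ j, (σ⁻¹).val i j • (X j : MvPolynomial (Fin n) ℝ))) =
      (fun i => ∑ j, (σ⁻¹).val i j • y j) := by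
    funext i; simp
  rw [h]

lemma aeval_polyActC (σ : Matrix.GeneralLinearGroup (Fin n) ℝ) (y : Fin n → ℂ)
    (p : MvPolynomial (Fin n) ℝ) :
    aeval y (polyAct σ p) = aeval (mAct σ⁻¹ y) p := by
  rw [aeval_polyAct]
  have h : (fun i => ∑ j, (σ⁻¹).val i j • y j) = mAct σ⁻¹ y := by
    funext i; simp [mAct, Complex.real_smul]
  rw [h]

lemma polyAct_mul (σ τ : Matrix.GeneralLinearGroup (Fin n) ℝ) (p : MvPolynomial (Fin n) ℝ) :
    polyAct σ (polyAct τ p) = polyAct (σ * τ) p := by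
  show (polyAct σ) (aeval (fun i => ∑ j, (τ⁻¹).val i j • X j) p) = _
  rw [comp_aeval_apply]
  show _ = aeval (fun i => ∑ j, ((σ * τ)⁻¹).val i j • X j) p
  have h : (fun i => (polyAct σ) (∑ j, (τ⁻¹).val i j • (X j : MvPolynomial (Fin n) ℝ))) =
      (fun i => ∑ j, ((σ * τ)⁻¹).val i j • X j) := by
    funext i
    rw [map_sum]
    have hX : ∀ j, (polyAct σ) ((τ⁻¹).val i j • X j)
        = (τ⁻¹).val i j • ∑ k, (σ⁻¹).val j k • X k := by
      intro j
      rw [map_smul]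
      congr 1
      exact aeval_X _ j
    simp only [hX, mul_inv_rev, Units.val_mul, Matrix.mul_apply, Finset.sum_smul,
      Finset.smul_sum, smul_smul]
    exact Finset.sum_comm
  rw [h]

lemma mAct_one (x : Fin n → ℂ) : mAct 1 x = x := by
  funext i
  simp [mAct, Matrix.one_apply, apply_ite, Finset.sum_ite_eq]

lemma mAct_mul (σ τ : Matrix.GeneralLinearGroup (Fin n) ℝ) (x : Fin n → ℂ) :
    mAct σ (mAct τ x) = mAct (σ * τ) x := by
  funext i
  simp only [mAct, Units.val_mul, Matrix.mul_apply]
  push_cast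
  simp only [Finset.mul_sum, Finset.sum_mul, mul_assoc]
  exact Finset.sum_comm

lemma conj_mAct (σ : Matrix.GeneralLinearGroup (Fin n) ℝ) (x : Fin n → ℂ) :
    (fun i => (starRingEnd ℂ) (mAct σ x i)) = mAct σ (fun i => (starRingEnd ℂ) (x i)) := by
  funext i
  simp [mAct, map_sum]

lemma conj_aeval (y : Fin n → ℂ) (p : MvPolynomial (Fin n) ℝ) :
    (starRingEnd ℂ) (aeval y p) = aeval (fun i => (starRingEnd ℂ) (y i)) p := by
  have := comp_aeval_apply (R := ℝ) (f := y) Complex.conjAe.toAlgHom p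
  simpa using this

end Aux

/-- if `H` is a broad subgroup of `G` and `x ∈ ℂⁿ` has trivial
`G`-stabilizer and all `G`-invariants are real at `x`, then for some `g ∈ G` all
`H`-invariants are real at `g · x`. -/
theorem statement_10 {n : ℕ}
    (G H : Subgroup (Matrix.GeneralLinearGroup (Fin n) ℝ)) [Finite G] (hHG : H ≤ G)
    (hH2 : ∀ τ ∈ H, τ ^ 2 = 1)
    (hbroad : ∀ σ ∈ G, σ ^ 2 = 1 → σ ≠ 1 → ∃ g ∈ G, g * σ * g⁻¹ ∈ H)
    (x : Fin n → ℂ)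
    (hstab : ∀ σ ∈ G, mAct σ x = x → σ = 1)
    (hreal : ∀ f ∈ invariants G, (aeval x f).im = 0) :
    ∃ g ∈ G, ∀ h ∈ invariants H, (aeval (mAct g x) h).im = 0 := by
  classical
  have hGfin : (G : Set (Matrix.GeneralLinearGroup (Fin n) ℝ)).Finite := Set.toFinite _
  set Gf : Finset (Matrix.GeneralLinearGroup (Fin n) ℝ) := hGfin.toFinset with hGfdef
  have hmemGf : ∀ σ, σ ∈ Gf ↔ σ ∈ G := fun σ => hGfin.mem_toFinset
  set xc : Fin n → ℂ := fun i => (starRingEnd ℂ) (x i) with hxcdef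
  have hcard : (Nat.card G : ℝ) ≠ 0 := by
    have : 0 < Nat.card G := Nat.card_pos
    exact_mod_cast this.ne'
  have hrey : ∀ p : MvPolynomial (Fin n) ℝ,
      reynolds G p = (Nat.card G : ℝ)⁻¹ • ∑ σ ∈ Gf, polyAct σ p := by
    intro p
    rw [reynolds, ← hGfin.coe_toFinset, finsum_mem_coe_finset]
  have hreyinv : ∀ p : MvPolynomial (Fin n) ℝ, reynolds G p ∈ invariants G := by
    intro p
    rw [mem_invariants]
    intro τ hτ
    rw [hrey, map_smul, map_sum]
    have h1 : ∀ σ ∈ Gf, polyAct τ (polyAct σ p) = polyAct (τ * σ) p :=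
      fun σ _ => polyAct_mul τ σ p
    rw [Finset.sum_congr rfl h1]
    congr 1
    refine Finset.sum_equiv (Equiv.mulLeft τ) (fun σ => ?_) (fun σ _ => rfl)
    simp only [hmemGf, Equiv.coe_mulLeft]
    constructor
    · exact fun hσ => G.mul_mem hτ hσ
    · intro hσ
      have := G.mul_mem (G.inv_mem hτ) hσ
      rwa [inv_mul_cancel_left] at this
  have stepA : ∀ p : MvPolynomial (Fin n) ℝ,
      ∑ σ ∈ Gf, (aeval (mAct σ⁻¹ x) p : ℂ) = ∑ σ ∈ Gf, aeval (mAct σ⁻¹ xc) p := by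
    intro p
    have h1 : (aeval x (reynolds G p)).im = 0 := hreal _ (hreyinv p)
    have h2 : aeval x (reynolds G p)
        = (Nat.card G : ℝ)⁻¹ • ∑ σ ∈ Gf, (aeval (mAct σ⁻¹ x) p : ℂ) := by
      rw [hrey, map_smul, map_sum]
      congr 1
      exact Finset.sum_congr rfl fun σ _ => aeval_polyActC σ x p
    have h3 : (∑ σ ∈ Gf, (aeval (mAct σ⁻¹ x) p : ℂ)).im = 0 := by
      rw [h2, Complex.real_smul, Complex.mul_im] at h1
      simp only [Complex.ofReal_im, Complex.ofReal_re, zero_mul, add_zero] at h1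
      rcases mul_eq_zero.mp h1 with h | h
      · exact absurd h (inv_ne_zero hcard)
      · exact h
    have h4 : (starRingEnd ℂ) (∑ σ ∈ Gf, (aeval (mAct σ⁻¹ x) p : ℂ))
        = ∑ σ ∈ Gf, (aeval (mAct σ⁻¹ x) p : ℂ) := Complex.conj_eq_iff_im.mpr h3
    calc ∑ σ ∈ Gf, (aeval (mAct σ⁻¹ x) p : ℂ)
        = (starRingEnd ℂ) (∑ σ ∈ Gf, (aeval (mAct σ⁻¹ x) p : ℂ)) := h4.symm
      _ = ∑ σ ∈ Gf, (aeval (mAct σ⁻¹ xc) p : ℂ) := by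
          rw [map_sum]
          refine Finset.sum_congr rfl fun σ _ => ?_
          rw [conj_aeval, conj_mAct σ⁻¹ x, ← hxcdef]
  have stepB : ∀ f : MvPolynomial (Fin n) ℂ,
      ∑ σ ∈ Gf, eval (mAct σ⁻¹ x) f = ∑ σ ∈ Gf, eval (mAct σ⁻¹ xc) f := by
    intro f
    have key : ∀ y : Fin n → ℂ, ∀ d : Fin n →₀ ℕ,
        (∏ i ∈ d.support, y i ^ d i) = aeval y (monomial d (1 : ℝ)) := by
      intro y d
      rw [aeval_monomial, map_one, one_mul, Finsupp.prod]
    simp only [eval_eq]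
    rw [Finset.sum_comm]
    conv_rhs => rw [Finset.sum_comm]
    refine Finset.sum_congr rfl fun d _ => ?_
    rw [← Finset.mul_sum, ← Finset.mul_sum]
    congr 1
    simp only [key]
    exact stepA (monomial d 1)
  have hexist : ∃ σ ∈ G, mAct σ x = xc := by
    by_contra hcon
    push_neg at hcon
    set T : Finset (Fin n → ℂ) :=
      (Gf.image fun σ => mAct σ⁻¹ xc) ∪ ((Gf.erase 1).image fun σ => mAct σ⁻¹ x) with hT
    have hTne : ∀ y ∈ T, y ≠ x := by
      intro y hy
      rw [hT, Finset.mem_union] at hy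
      rcases hy with hy | hy
      · obtain ⟨σ, hσ, rfl⟩ := Finset.mem_image.mp hy
        intro hyx
        refine hcon σ ((hmemGf σ).mp hσ) ?_
        rw [← hyx, mAct_mul, mul_inv_cancel, mAct_one]
      · obtain ⟨σ, hσ, rfl⟩ := Finset.mem_image.mp hy
        rw [Finset.mem_erase] at hσ
        intro hyx
        have := hstab σ⁻¹ (G.inv_mem ((hmemGf σ).mp hσ.2)) hyx
        exact hσ.1 (by rwa [inv_eq_one] at this)
    have hsep : ∀ y ∈ T, ∃ i, y i ≠ x i := fun y hy => Function.ne_iff.mp (hTne y hy)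
    choose idx hidx using hsep
    set f : MvPolynomial (Fin n) ℂ :=
      ∏ y ∈ T.attach, (C (x (idx y.1 y.2) - y.1 (idx y.1 y.2))⁻¹ *
        (X (idx y.1 y.2) - C (y.1 (idx y.1 y.2)))) with hf
    have hfx : eval x f = 1 := by
      rw [hf, map_prod]
      refine Finset.prod_eq_one fun y _ => ?_
      simp only [map_mul, map_sub, eval_C, eval_X]
      exact inv_mul_cancel₀ (sub_ne_zero_of_ne (Ne.symm (hidx y.1 y.2)))
    have hfy : ∀ y0 ∈ T, eval y0 f = 0 := by
      intro y0 hy0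
      rw [hf, map_prod]
      refine Finset.prod_eq_zero (Finset.mem_attach T ⟨y0, hy0⟩) ?_
      simp
    have hL : ∑ σ ∈ Gf, eval (mAct σ⁻¹ x) f = 1 := by
      rw [Finset.sum_eq_single_of_mem 1 ((hmemGf 1).mpr G.one_mem)]
      · rw [inv_one, mAct_one, hfx]
      · intro σ hσ hσ1
        apply hfy
        rw [hT, Finset.mem_union]
        right
        exact Finset.mem_image.mpr ⟨σ, Finset.mem_erase.mpr ⟨hσ1, hσ⟩, rfl⟩
    have hR : ∑ σ ∈ Gf, eval (mAct σ⁻¹ xc) f = 0 := by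
      refine Finset.sum_eq_zero fun σ hσ => ?_
      apply hfy
      rw [hT, Finset.mem_union]
      left
      exact Finset.mem_image.mpr ⟨σ, hσ, rfl⟩
    rw [stepB f, hR] at hL
    exact one_ne_zero hL.symm
  obtain ⟨σ₀, hσ₀G, hσ₀⟩ := hexist
  have hconj : mAct σ₀ xc = x := by
    funext i
    calc mAct σ₀ xc i = (starRingEnd ℂ) (mAct σ₀ x i) := by
          rw [hxcdef]
          exact (congrFun (conj_mAct σ₀ x) i).symm
      _ = (starRingEnd ℂ) (xc i) := by rw [hσ₀]
      _ = x i := by rw [hxcdef]; exact Complex.conj_conj (x i)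
  have hsq : σ₀ ^ 2 = 1 := by
    refine hstab _ (pow_mem hσ₀G 2) ?_
    rw [pow_two, ← mAct_mul, hσ₀, hconj]
  by_cases h1 : σ₀ = 1
  · refine ⟨1, G.one_mem, fun h hh => ?_⟩
    have hxr : xc = x := by rw [← hσ₀, h1, mAct_one]
    rw [mAct_one]
    have hc : (starRingEnd ℂ) (aeval x h) = aeval x h := by
      rw [conj_aeval, ← hxcdef, hxr]
    exact Complex.conj_eq_iff_im.mp hc
  · obtain ⟨g, hgG, hτH⟩ := hbroad σ₀ hσ₀G hsq h1
    refine ⟨g, hgG, fun h hh => ?_⟩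
    have hh' : ∀ τ ∈ H, polyAct τ h = h := mem_invariants.mp hh
    set τ := g * σ₀ * g⁻¹ with hτ
    have hτ2 : τ * τ = 1 := by
      have := hH2 τ hτH
      rwa [pow_two] at this
    have hτinv : τ⁻¹ = τ := inv_eq_of_mul_eq_one_left hτ2
    have hcy : (fun i => (starRingEnd ℂ) (mAct g x i)) = mAct τ (mAct g x) := by
      rw [conj_mAct g x, ← hxcdef, ← hσ₀, mAct_mul, mAct_mul]
      congr 1
      rw [hτ]
      group
    have hc : (starRingEnd ℂ) (aeval (mAct g x) h) = aeval (mAct g x) h := by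
      rw [conj_aeval, hcy, ← hτinv, ← aeval_polyActC, hh' τ hτH]
    exact Complex.conj_eq_iff_im.mp hc
end
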